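/- The set of positive integers n such that 5 divides the numerator of H(n) is exactly {4, 20, 24}, i.e., J_5 = {4, 20, 24}. -/

import Mathlib

/-!
Write `H n = H ⌊n/5⌋ / 5 + C n`, where `C n` sums the `1/k`, `k ≤ n`, `5 ∤ k`, so `v₅(C n) ≥ 0`.
Hence `v₅(H ⌊n/5⌋) ≤ 0` forces `v₅(H n) = v₅(H ⌊n/5⌋) - 1 < 0`, and by descent `v₅(H n) ≥ 1`
is only possible for `n < 5` or `⌊n/5⌋ ∈ {4, 20, 24}`. For these finitely many `n` we compute
the numerator of `H n`, since `v₅(q) ≥ 1` iff `5` divides the reduced numerator of `q`.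
-/

def H (n : ℕ) : ℚ := ∑ i ∈ Finset.range n, (1 : ℚ) / (i + 1)

open Finset

theorem H_eq_harmonic (n : ℕ) : H n = harmonic n := by
  simp [H, harmonic]

namespace padicValRat

variable {p : ℕ} [hp : Fact p.Prime]

theorem one_le_iff_dvd_num {q : ℚ} (hq : q ≠ 0) : 1 ≤ padicValRat p q ↔ (p : ℤ) ∣ q.num := by
  rw [padicValRat_def]
  constructor
  · intro hv
    by_contra hdvd
    rw [padicValInt.eq_zero_of_not_dvd hdvd] at hv
    omega
  · intro hdvd
    have hden : ¬ p ∣ q.den := fun hden =>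
      hp.out.ne_one (Nat.Coprime.eq_one_of_dvd (Nat.Coprime.coprime_dvd_left
        (Int.natCast_dvd.mp hdvd) q.reduced) hden)
    have hnum : 1 ≤ padicValInt p q.num :=
      (((padicValInt_dvd_iff 1 q.num).mp (by simpa using hdvd)).resolve_left
        (Rat.num_ne_zero.mpr hq))
    rw [padicValNat.eq_zero_of_not_dvd hden]
    omega

theorem sum_nonneg {ι : Type*} {s : Finset ι} {F : ι → ℚ}
    (hF : ∀ i ∈ s, 0 ≤ padicValRat p (F i)) : 0 ≤ padicValRat p (∑ i ∈ s, F i) := by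
  classical
  induction s using Finset.induction_on with
  | empty => simp
  | insert a s ha ih =>
    rw [Finset.sum_insert ha]
    by_cases hsum : F a + ∑ i ∈ s, F i = 0
    · simp [hsum]
    · exact (le_min (hF a (mem_insert_self a s))
        (ih fun i hi => hF i (mem_insert_of_mem hi))).trans (min_le_padicValRat_add hsum)

end padicValRat

def harmonicCoprime (p n : ℕ) : ℚ := ∑ i ∈ range n with ¬ p ∣ i + 1, (↑(i + 1))⁻¹

theorem harmonic_eq_harmonic_div_add_harmonicCoprime (p n : ℕ) :
    harmonic n = harmonic (n / p) / p + harmonicCoprime p n := by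
  induction n with
  | zero => simp [harmonicCoprime]
  | succ n ih =>
    simp only [harmonicCoprime, sum_filter, sum_range_succ] at ih ⊢
    rw [harmonic_succ, ih, Nat.succ_div]
    by_cases hdvd : p ∣ n + 1
    · have hp : (p : ℚ) ≠ 0 := Nat.cast_ne_zero.mpr (ne_zero_of_dvd_ne_zero n.succ_ne_zero hdvd)
      have hmul : ((n / p + 1 : ℕ) : ℚ) * p = (n + 1 : ℕ) := by
        rw [← Nat.cast_mul, ← Nat.succ_div_of_dvd hdvd, Nat.div_mul_cancel hdvd]
      simp only [hdvd, if_true, not_true, if_false, harmonic_succ]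
      rw [← hmul]
      field_simp
      ring
    · simp only [hdvd, if_false, not_false_eq_true, if_true, add_zero]
      ring

theorem padicValRat_harmonicCoprime_nonneg (p : ℕ) [Fact p.Prime] (n : ℕ) :
    0 ≤ padicValRat p (harmonicCoprime p n) :=
  padicValRat.sum_nonneg fun i hi => by
    rw [padicValRat.inv, padicValRat.of_nat,
      padicValNat.eq_zero_of_not_dvd (mem_filter.mp hi).2, Nat.cast_zero, neg_zero]

theorem padicValRat_harmonic_eq_sub_one_of_nonpos {p : ℕ} [hp : Fact p.Prime] {n : ℕ} (hn : p ≤ n)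
    (h : padicValRat p (harmonic (n / p)) ≤ 0) :
    padicValRat p (harmonic n) = padicValRat p (harmonic (n / p)) - 1 := by
  have hp0 : (p : ℚ) ≠ 0 := Nat.cast_ne_zero.mpr hp.out.ne_zero
  have hdiv : harmonic (n / p) ≠ 0 :=
    (harmonic_pos (Nat.div_pos hn hp.out.pos).ne').ne'
  have hval : padicValRat p (harmonic (n / p) / p) = padicValRat p (harmonic (n / p)) - 1 := by
    rw [padicValRat.div hdiv hp0, padicValRat.self hp.out.one_lt]
  have hn0 : harmonic n ≠ 0 := (harmonic_pos (hp.out.pos.trans_le hn).ne').ne'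
  rw [harmonic_eq_harmonic_div_add_harmonicCoprime p n] at hn0 ⊢
  by_cases hC : harmonicCoprime p n = 0
  · rw [hC, add_zero, hval]
  · have hlt : padicValRat p (harmonic (n / p) / p) < padicValRat p (harmonicCoprime p n) := by
      have := padicValRat_harmonicCoprime_nonneg p n
      rw [hval]
      omega
    rw [padicValRat.add_eq_of_lt hn0 (div_ne_zero hdiv hp0) hC hlt, hval]

theorem five_dvd_num_harmonic : ∀ n ∈ [4, 20, 24], (5 : ℤ) ∣ (harmonic n).num := by
  decide +kernel

-- The `n ∉ {4, 20, 24}` with `n < 5` or `n / 5 ∈ {4, 20, 24}`, on which the descent says nothing.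
theorem five_not_dvd_num_harmonic :
    ∀ n ∈ [1, 2, 3, 21, 22, 23, 100, 101, 102, 103, 104, 120, 121, 122, 123, 124],
      ¬ (5 : ℤ) ∣ (harmonic n).num := by
  decide +kernel

theorem padicValRat_five_harmonic_nonpos (n : ℕ) (hn : n ≠ 0) (h4 : n ≠ 4) (h20 : n ≠ 20)
    (h24 : n ≠ 24) : padicValRat 5 (harmonic n) ≤ 0 := by
  have := Fact.mk Nat.prime_five
  induction n using Nat.strong_induction_on with
  | _ n ih =>
  by_cases hbase : n < 5 ∨ n / 5 = 4 ∨ n / 5 = 20 ∨ n / 5 = 24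
  · have hnum := five_not_dvd_num_harmonic n (by simp only [List.mem_cons]; omega)
    by_contra hpos
    exact hnum ((padicValRat.one_le_iff_dvd_num (p := 5) (harmonic_pos hn).ne').mp (by omega))
  · have hdiv := ih (n / 5) (by omega) (by omega) (by omega) (by omega) (by omega)
    rw [padicValRat_harmonic_eq_sub_one_of_nonpos (by omega) hdiv]
    omega

theorem stmt_15 :
    {n : ℕ | 1 ≤ n ∧ 1 ≤ padicValRat 5 (H n)} = {4, 20, 24} := by
  have := Fact.mk Nat.prime_five
  ext n
  simp only [Set.mem_ofPred_eq, Set.mem_insert_iff, Set.mem_singleton_iff, H_eq_harmonic]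
  constructor
  · rintro ⟨hn, hv⟩
    by_contra! hexc
    have := padicValRat_five_harmonic_nonpos n (by omega) hexc.1 hexc.2.1 hexc.2.2
    omega
  · intro hexc
    refine ⟨by omega, (padicValRat.one_le_iff_dvd_num (harmonic_pos (by omega)).ne').mpr ?_⟩
    exact five_dvd_num_harmonic n (by simp only [List.mem_cons]; omega)
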